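/- arXiv:1903.09191 — 2 statements merged into one kernel-verified Lean document; each statement's English description precedes it below -/
import Mathlib

section
/- Let 1 → F → G → H → 1 be a split short exact sequence of groups such that the induced action of H on the abelianization F/[F,F] is trivial. Then for each k ≥ 1, the induced sequence 1 → F/Γ^k F → G/Γ^k G → H/Γ^k H → 1 is exact, where Γ^k denotes the k-th term of the lower central series. -/
/-!
Inside `G` put `K = i.range`, which is normal, and `L = s.range`, so that `K ⊔ L = ⊤`,
`K ⊓ L = ⊥`, and the hypothesis on the action reads `⁅L, K⁆ ≤ ⁅K, K⁆`. Induction with the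
three subgroups lemma upgrades this to `⁅Γ^a L, Γ^b K⁆ ≤ Γ^(a+b) K`, where `Γ^1` is the subgroup
itself and all commutators are taken in `G`. Hence `P n = Γ^n K ⊔ Γ^n L` is normal in `G`, so
`⁅P n, K ⊔ L⁆ ≤ P (n + 1)` can be checked on the four commutators of the pieces, and
`Γ^n G ≤ P n` by induction. Intersecting with `K` gives `K ⊓ Γ^n G ≤ Γ^n K`, which is the
injectivity of `F/Γ^n F → G/Γ^n G`. Exactness at the other two places only uses that `π` is onto
with kernel `i.range`.
-/

open scoped commutatorElement

namespace Subgroup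

variable {G : Type*} [Group G]

theorem commutator_commutator_le_of_rotate {H₁ H₂ H₃ N : Subgroup G} [N.Normal]
    (h₁ : ⁅⁅H₂, H₃⁆, H₁⁆ ≤ N) (h₂ : ⁅⁅H₃, H₁⁆, H₂⁆ ≤ N) : ⁅⁅H₁, H₂⁆, H₃⁆ ≤ N := by
  rw [← QuotientGroup.ker_mk' N, ← map_eq_bot_iff] at h₁ h₂ ⊢
  simp only [map_commutator] at h₁ h₂ ⊢
  exact commutator_commutator_eq_bot_of_rotate h₁ h₂

theorem commutator_sup_left_le_iff {H₁ H₂ K N : Subgroup G} [N.Normal] :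
    ⁅H₁ ⊔ H₂, K⁆ ≤ N ↔ ⁅H₁, K⁆ ≤ N ∧ ⁅H₂, K⁆ ≤ N := by
  simp only [← QuotientGroup.ker_mk' N, ← map_eq_bot_iff, map_commutator, map_sup,
    commutator_eq_bot_iff_le_centralizer, sup_le_iff]

theorem commutator_sup_right_le_iff {H K₁ K₂ N : Subgroup G} [N.Normal] :
    ⁅H, K₁ ⊔ K₂⁆ ≤ N ↔ ⁅H, K₁⁆ ≤ N ∧ ⁅H, K₂⁆ ≤ N := by
  simp only [commutator_comm H, commutator_sup_left_le_iff]

theorem commutator_top_lowerCentralSeries_le (m n : ℕ) :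
    ⁅(⊤ : Subgroup G).lowerCentralSeries m, (⊤ : Subgroup G).lowerCentralSeries n⁆ ≤
      (⊤ : Subgroup G).lowerCentralSeries (m + n + 1) := by
  induction n generalizing m with
  | zero => exact le_rfl
  | succ n ih =>
    rw [lowerCentralSeries_succ, commutator_comm]
    apply commutator_commutator_le_of_rotate
    · rw [commutator_comm ⊤]
      exact (ih (m + 1)).trans_eq (congrArg _ (by omega))
    · rw [show m + (n + 1) + 1 = m + n + 1 + 1 by omega]
      exact commutator_mono (ih m) le_rfl

theorem commutator_lowerCentralSeries_le (S : Subgroup G) (m n : ℕ) :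
    ⁅S.lowerCentralSeries m, S.lowerCentralSeries n⁆ ≤ S.lowerCentralSeries (m + n + 1) := by
  rw [← top_subtype_lowerCentralSeries S m, ← top_subtype_lowerCentralSeries S n,
    ← top_subtype_lowerCentralSeries S, ← map_commutator]
  exact map_mono (commutator_top_lowerCentralSeries_le m n)

section

variable {K L : Subgroup G} [K.Normal]

theorem commutator_lowerCentralSeries_le_succ (hact : ⁅L, K⁆ ≤ ⁅K, K⁆) (n : ℕ) :
    ⁅L, K.lowerCentralSeries n⁆ ≤ K.lowerCentralSeries (n + 1) := by
  induction n with
  | zero => exact hact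
  | succ n ih =>
    rw [lowerCentralSeries_succ K n, commutator_comm]
    apply commutator_commutator_le_of_rotate
    · rw [commutator_comm K]
      exact (commutator_mono hact le_rfl).trans
        ((K.commutator_lowerCentralSeries_le 1 n).trans (K.lowerCentralSeries_antitone (by omega)))
    · exact commutator_mono ih le_rfl

theorem commutator_lowerCentralSeries_lowerCentralSeries_le (hact : ⁅L, K⁆ ≤ ⁅K, K⁆) (m n : ℕ) :
    ⁅L.lowerCentralSeries m, K.lowerCentralSeries n⁆ ≤ K.lowerCentralSeries (m + n + 1) := by
  induction m generalizing n with
  | zero => exact (commutator_lowerCentralSeries_le_succ hact n).trans_eq (by rw [zero_add])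
  | succ m ih =>
    rw [lowerCentralSeries_succ L m]
    apply commutator_commutator_le_of_rotate
    · rw [commutator_comm]
      refine (commutator_mono le_rfl (commutator_lowerCentralSeries_le_succ hact n)).trans ?_
      exact (ih (n + 1)).trans (K.lowerCentralSeries_antitone (by omega))
    · rw [commutator_comm (K.lowerCentralSeries n)]
      refine (commutator_mono (ih n) le_rfl).trans ?_
      rw [commutator_comm]
      exact (commutator_lowerCentralSeries_le_succ hact _).trans
        (K.lowerCentralSeries_antitone (by omega))

theorem lowerCentralSeries_sup_normal (hact : ⁅L, K⁆ ≤ ⁅K, K⁆) (hKL : K ⊔ L = ⊤) (n : ℕ) :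
    (K.lowerCentralSeries n ⊔ L.lowerCentralSeries n).Normal := by
  rw [← normalizer_eq_top_iff, eq_top_iff, ← hKL]
  refine sup_le (le_normalizer_iff.mpr ?_) (le_normalizer_iff.mpr ?_) <;>
    intro g hg x hx <;> obtain ⟨b, hb, a, ha, rfl⟩ := mem_sup_of_normal_left.mp hx
  · have hga : ⁅g, a⁆ ∈ K.lowerCentralSeries n :=
      K.lowerCentralSeries_antitone (show n ≤ n + 0 + 1 by omega) <|
        (commutator_comm K _).trans_le
          (commutator_lowerCentralSeries_lowerCentralSeries_le hact n 0)
          (commutator_mem_commutator hg ha)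
    rw [show g * (b * a) * g⁻¹ = g * b * g⁻¹ * ⁅g, a⁆ * a by group]
    exact mul_mem_sup (mul_mem (Normal.conj_mem inferInstance b hb g) hga) ha
  · rw [show g * (b * a) * g⁻¹ = g * b * g⁻¹ * (g * a * g⁻¹) by group]
    exact mul_mem_sup (Normal.conj_mem inferInstance b hb g)
      ((mem_normalizer_iff.mp (L.self_le_normalizer_lowerCentralSeries n hg) a).mp ha)

theorem top_lowerCentralSeries_le_sup (hact : ⁅L, K⁆ ≤ ⁅K, K⁆) (hKL : K ⊔ L = ⊤) (n : ℕ) :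
    (⊤ : Subgroup G).lowerCentralSeries n ≤ K.lowerCentralSeries n ⊔ L.lowerCentralSeries n := by
  induction n with
  | zero => exact hKL.ge
  | succ n ih =>
    have := lowerCentralSeries_sup_normal hact hKL (n + 1)
    refine (commutator_mono ih hKL.ge).trans ?_
    rw [commutator_sup_left_le_iff, commutator_sup_right_le_iff, commutator_sup_right_le_iff]
    refine ⟨⟨le_sup_left, ?_⟩, ?_, le_sup_right⟩
    · rw [commutator_comm]
      exact (commutator_lowerCentralSeries_le_succ hact n).trans le_sup_left
    · exact (commutator_lowerCentralSeries_lowerCentralSeries_le hact n 0).trans le_sup_left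

theorem inf_top_lowerCentralSeries_le (hact : ⁅L, K⁆ ≤ ⁅K, K⁆) (hKL : K ⊔ L = ⊤)
    (hdisj : Disjoint K L) (n : ℕ) :
    K ⊓ (⊤ : Subgroup G).lowerCentralSeries n ≤ K.lowerCentralSeries n := by
  rintro x ⟨hxK, hx⟩
  have := lowerCentralSeries_sup_normal hact hKL n
  obtain ⟨b, hb, a, ha, rfl⟩ :=
    mem_sup_of_normal_left.mp (top_lowerCentralSeries_le_sup hact hKL n hx)
  have hbK : b ∈ K := K.lowerCentralSeries_le_self n hb
  have haK : a ∈ K := by simpa using mul_mem (inv_mem hbK) hxK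
  rwa [disjoint_def.mp hdisj haK (L.lowerCentralSeries_le_self n ha), mul_one]

end

end Subgroup

namespace QuotientGroup

variable {F G H : Type*} [Group F] [Group G] [Group H]
  {N₁ : Subgroup F} {N₂ : Subgroup G} {N₃ : Subgroup H} [N₁.Normal] [N₂.Normal] [N₃.Normal]

theorem injective_of_comap_le {i : F →* G} {φ : F ⧸ N₁ →* G ⧸ N₂}
    (hφ : ∀ f, φ (mk' N₁ f) = mk' N₂ (i f)) (h : N₂.comap i ≤ N₁) : Function.Injective φ := by
  refine (injective_iff_map_eq_one φ).mpr fun x hx => ?_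
  obtain ⟨f, rfl⟩ := mk'_surjective N₁ x
  rw [hφ, mk'_apply, eq_one_iff] at hx
  exact (eq_one_iff f).mpr (h hx)

theorem surjective_of_surjective {π : G →* H} {ψ : G ⧸ N₂ →* H ⧸ N₃}
    (hψ : ∀ g, ψ (mk' N₂ g) = mk' N₃ (π g)) (hπ : Function.Surjective π) :
    Function.Surjective ψ := by
  intro y
  obtain ⟨h, rfl⟩ := mk'_surjective N₃ y
  obtain ⟨g, rfl⟩ := hπ h
  exact ⟨_, hψ g⟩

theorem range_eq_ker_of_range_eq_ker {i : F →* G} {π : G →* H}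
    {φ : F ⧸ N₁ →* G ⧸ N₂} {ψ : G ⧸ N₂ →* H ⧸ N₃}
    (hφ : ∀ f, φ (mk' N₁ f) = mk' N₂ (i f)) (hψ : ∀ g, ψ (mk' N₂ g) = mk' N₃ (π g))
    (hexact : i.range = π.ker) (hN : N₃ ≤ N₂.map π) : φ.range = ψ.ker := by
  apply le_antisymm
  · rintro _ ⟨x, rfl⟩
    obtain ⟨f, rfl⟩ := mk'_surjective N₁ x
    have hπi : π (i f) = 1 := by rw [← MonoidHom.mem_ker, ← hexact]; exact ⟨f, rfl⟩
    rw [MonoidHom.mem_ker, hφ, hψ, hπi, map_one]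
  · intro x hx
    obtain ⟨g, rfl⟩ := mk'_surjective N₂ x
    rw [MonoidHom.mem_ker, hψ, mk'_apply, eq_one_iff] at hx
    obtain ⟨g', hg', hπg'⟩ := hN hx
    obtain ⟨f, hf⟩ : g * g'⁻¹ ∈ i.range := by
      rw [hexact, MonoidHom.mem_ker, map_mul, map_inv, hπg', mul_inv_cancel]
    refine ⟨mk' N₁ f, ?_⟩
    rw [hφ, hf, mk'_apply, mk'_apply, QuotientGroup.eq]
    simpa [mul_assoc] using hg'

end QuotientGroup

namespace MonoidHom

variable {F G H : Type*} [Group F] [Group G] [Group H] {i : F →* G} {π : G →* H} {s : H →* G}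

theorem range_sup_range_eq_top_of_comp_eq_id (hexact : i.range = π.ker)
    (hsec : π.comp s = MonoidHom.id H) : i.range ⊔ s.range = ⊤ := by
  refine eq_top_iff.mpr fun g _ => ?_
  have hg : g * (s (π g))⁻¹ ∈ i.range := by
    rw [hexact, mem_ker, map_mul, map_inv, ← comp_apply, hsec, id_apply, mul_inv_cancel]
  simpa using Subgroup.mul_mem_sup hg (s.mem_range.mpr ⟨π g, rfl⟩)

theorem disjoint_range_range_of_comp_eq_id (hker : i.range ≤ π.ker)
    (hsec : π.comp s = MonoidHom.id H) : Disjoint i.range s.range := by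
  rw [Subgroup.disjoint_def]
  rintro _ hx ⟨h, rfl⟩
  replace hx := hker hx
  rw [mem_ker, ← comp_apply, hsec, id_apply] at hx
  rw [hx, map_one]

theorem commutator_range_le_of_trivial_on_abelianization (htriv : ∀ (h : H) (f : F), ∃ f' : F,
      i f' = s h * i f * (s h)⁻¹ ∧ Abelianization.of f' = Abelianization.of f) :
    ⁅s.range, i.range⁆ ≤ ⁅i.range, i.range⁆ := by
  rw [Subgroup.commutator_le]
  rintro _ ⟨h, rfl⟩ _ ⟨f, rfl⟩
  obtain ⟨f', hf', hab⟩ := htriv h f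
  have hcomm : f' * f⁻¹ ∈ commutator F := by
    rw [← Abelianization.ker_of, mem_ker, map_mul, map_inv, hab, mul_inv_cancel]
  rw [commutatorElement_def, ← hf', ← map_inv, ← map_mul, range_eq_map, ← Subgroup.map_commutator]
  exact Subgroup.mem_map_of_mem i hcomm

end MonoidHom

/-- Falk–Randell: given a split short exact sequence `1 → F → G → H → 1` such that
the induced (conjugation) action of `H` on the abelianization of `F` is trivial,
the induced sequence `1 → F/Γ^k F → G/Γ^k G → H/Γ^k H` is exact for every `k`.
(Here `lowerCentralSeries · k` is the `(k+1)`-st term `Γ^{k+1}` of the lower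
central series, so all `k : ℕ` are covered.) -/
theorem stmt0 {F G H : Type*} [Group F] [Group G] [Group H]
    (i : F →* G) (π : G →* H) (s : H →* G)
    (hinj : Function.Injective i) (hsurj : Function.Surjective π)
    (hexact : i.range = π.ker)
    (hsec : π.comp s = MonoidHom.id H)
    (htriv : ∀ (h : H) (f : F), ∃ f' : F,
      i f' = s h * i f * (s h)⁻¹ ∧ Abelianization.of f' = Abelianization.of f)
    (k : ℕ)
    (φ : F ⧸ (⊤ : Subgroup F).lowerCentralSeries k →* G ⧸ (⊤ : Subgroup G).lowerCentralSeries k)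
    (ψ : G ⧸ (⊤ : Subgroup G).lowerCentralSeries k →* H ⧸ (⊤ : Subgroup H).lowerCentralSeries k)
    (hφ : ∀ f : F, φ (QuotientGroup.mk' ((⊤ : Subgroup F).lowerCentralSeries k) f) =
      QuotientGroup.mk' ((⊤ : Subgroup G).lowerCentralSeries k) (i f))
    (hψ : ∀ g : G, ψ (QuotientGroup.mk' ((⊤ : Subgroup G).lowerCentralSeries k) g) =
      QuotientGroup.mk' ((⊤ : Subgroup H).lowerCentralSeries k) (π g)) :
    Function.Injective φ ∧ Function.Surjective ψ ∧ φ.range = ψ.ker := by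
  have : i.range.Normal := hexact ▸ π.normal_ker
  have hKL := MonoidHom.range_sup_range_eq_top_of_comp_eq_id hexact hsec
  have hdisj := MonoidHom.disjoint_range_range_of_comp_eq_id hexact.le hsec
  have hact := MonoidHom.commutator_range_le_of_trivial_on_abelianization htriv
  refine ⟨QuotientGroup.injective_of_comap_le hφ fun f hf => ?_,
    QuotientGroup.surjective_of_surjective hψ hsurj,
    QuotientGroup.range_eq_ker_of_range_eq_ker hφ hψ hexact ?_⟩
  · have := Subgroup.inf_top_lowerCentralSeries_le hact hKL hdisj k ⟨⟨f, rfl⟩, hf⟩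
    rwa [MonoidHom.range_eq_map, ← Subgroup.map_lowerCentralSeries,
      Subgroup.mem_map_iff_mem hinj] at this
  · rw [Subgroup.map_lowerCentralSeries, ← MonoidHom.range_eq_map, MonoidHom.range_eq_top.mpr hsurj]
end

section
/- Let G be a nilpotent group that is uniquely divisible and such that H₁(G, ℚ) = G^{ab} ⊗ ℚ is finite-dimensional over ℚ. Then every graded piece Γ^k G / Γ^{k+1} G of the lower central series of G is a finite-dimensional ℚ-vector space. -/
/-!
The commutator map induces a pairing `Γᵏ/Γᵏ⁺¹ × Gᵃᵇ → Γᵏ⁺¹/Γᵏ⁺²`, multiplicative in each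
variable, whose image generates the target. As `Gᵃᵇ` is divisible, every graded piece is
divisible; and once the pieces are `ℚ`-vector spaces, the pairing gives a surjection
`(Γᵏ/Γᵏ⁺¹) ⊗_ℚ (ℚ ⊗ Gᵃᵇ) → Γᵏ⁺¹/Γᵏ⁺²`, so finite dimension propagates up the series.

Since `G` is nilpotent, an `n`-th root of `g ∈ Γᵏ` can be built inside `Γᵏ` by correcting an
approximate root one graded piece at a time. Uniqueness of roots in `G` then makes each `Γᵏ`
closed under roots, so the graded pieces are torsion-free, hence uniquely divisible. A uniquely
divisible abelian group is its own localization at the nonzero integers, hence a `ℚ`-vector space.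
-/

open scoped TensorProduct commutatorElement

section RatModule

variable {M : Type*} [AddCommGroup M]

theorem bijective_zsmul_of_bijective_nsmul
    (h : ∀ n : ℕ, 0 < n → Function.Bijective fun a : M => n • a) {m : ℤ} (hm : m ≠ 0) :
    Function.Bijective fun a : M => m • a := by
  obtain ⟨n, rfl | rfl⟩ := m.eq_nat_or_neg
  · simpa only [natCast_zsmul] using h n (by omega)
  · simp only [neg_smul, natCast_zsmul]
    exact (neg_bijective (G := M)).comp (h n (by omega))

theorem isLocalizedModule_id_of_bijective_nsmul
    (h : ∀ n : ℕ, 0 < n → Function.Bijective fun a : M => n • a) :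
    IsLocalizedModule (nonZeroDivisors ℤ) (LinearMap.id : M →ₗ[ℤ] M) where
  map_units m := (Module.End.isUnit_iff _).2
    (bijective_zsmul_of_bijective_nsmul h (nonZeroDivisors.ne_zero m.2))
  surj y := ⟨(y, 1), one_smul _ _⟩
  exists_of_eq e := ⟨1, congrArg _ e⟩

noncomputable abbrev ratModuleOfBijectiveNSMul
    (h : ∀ n : ℕ, 0 < n → Function.Bijective fun a : M => n • a) : Module ℚ M :=
  haveI := isLocalizedModule_id_of_bijective_nsmul h
  IsLocalizedModule.module (nonZeroDivisors ℤ) (A := ℚ) LinearMap.id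

end RatModule

section FiniteDimensional

variable {N P : Type*} [AddCommGroup N] [AddCommGroup P] [Module ℚ P]
  [Module.Finite ℚ (ℚ ⊗[ℤ] N)]

theorem Module.Finite.rat_of_surjective_addMonoidHom (f : N →+ P)
    (hf : Function.Surjective f) : Module.Finite ℚ P := by
  refine Module.Finite.of_surjective (f.toIntLinearMap.liftBaseChange ℚ) fun p => ?_
  obtain ⟨n, rfl⟩ := hf p
  exact ⟨1 ⊗ₜ n, by simp⟩

theorem Module.Finite.rat_of_closure_range_eq_top {M : Type*} [AddCommGroup M] [Module ℚ M]
    [Module.Finite ℚ M] (φ : M →+ N →+ P)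
    (hφ : AddSubgroup.closure (Set.range fun p : M × N => φ p.1 p.2) = ⊤) :
    Module.Finite ℚ P := by
  let B : M →ₗ[ℚ] ℚ ⊗[ℤ] N →ₗ[ℚ] P :=
    (((LinearMap.liftBaseChangeEquiv ℚ).toAddMonoidHom.comp
      (addMonoidHomLequivInt ℚ).toAddMonoidHom).comp φ).toRatLinearMap
  have hrange : AddSubgroup.closure (Set.range fun p : M × N => φ p.1 p.2) ≤
      (LinearMap.range (TensorProduct.lift B)).toAddSubgroup := by
    rw [AddSubgroup.closure_le]
    rintro _ ⟨⟨m, n⟩, rfl⟩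
    exact ⟨m ⊗ₜ (1 ⊗ₜ n), by simp [B]⟩
  refine Module.Finite.of_surjective (TensorProduct.lift B) fun p => ?_
  exact hrange (hφ ▸ AddSubgroup.mem_top p)

end FiniteDimensional

section LowerCentralGraded

open Subgroup

variable {G : Type*} [Group G] {k : ℕ}

local notation "Γ" => Subgroup.lowerCentralSeries (⊤ : Subgroup G)

theorem commutatorElement_mem_lowerCentralSeries_succ {x : G} (hx : x ∈ Γ k) (g : G) :
    ⁅x, g⁆ ∈ Γ (k + 1) :=
  commutator_mem_commutator hx (mem_top g)

theorem inv_mul_mul_comm_mem_lowerCentralSeries_succ {x : G} (hx : x ∈ Γ k) (g : G) :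
    (x * g)⁻¹ * (g * x) ∈ Γ (k + 1) := by
  have h := inv_mem (commutatorElement_mem_lowerCentralSeries_succ (inv_mem hx) g⁻¹)
  convert h using 1
  group

theorem commute_mk_of_mem_lowerCentralSeries {x : G} (hx : x ∈ Γ k) (g : G) :
    Commute (x : G ⧸ Γ (k + 1)) g :=
  QuotientGroup.eq.2 (inv_mul_mul_comm_mem_lowerCentralSeries_succ hx g)

variable (G) in
abbrev LowerCentralGraded (k : ℕ) : Type _ := Γ k ⧸ (Γ (k + 1)).subgroupOf (Γ k)

namespace LowerCentralGraded

def mk (x : G) (hx : x ∈ Γ k) : LowerCentralGraded G k := QuotientGroup.mk ⟨x, hx⟩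

theorem mk_surjective (y : LowerCentralGraded G k) : ∃ x hx, mk x hx = y := by
  obtain ⟨⟨x, hx⟩, rfl⟩ := QuotientGroup.mk_surjective y
  exact ⟨x, hx, rfl⟩

theorem mk_eq_mk_iff {x y : G} (hx : x ∈ Γ k) (hy : y ∈ Γ k) :
    mk x hx = mk y hy ↔ x⁻¹ * y ∈ Γ (k + 1) :=
  QuotientGroup.eq.trans mem_subgroupOf

theorem mk_eq_one_iff {x : G} (hx : x ∈ Γ k) : mk x hx = 1 ↔ x ∈ Γ (k + 1) :=
  (QuotientGroup.eq_one_iff _).trans mem_subgroupOf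

theorem mk_mul {x y : G} (hx : x ∈ Γ k) (hy : y ∈ Γ k) :
    mk x hx * mk y hy = mk (x * y) (mul_mem hx hy) := rfl

theorem mk_pow {x : G} (hx : x ∈ Γ k) (n : ℕ) : mk x hx ^ n = mk (x ^ n) (pow_mem hx n) := rfl

theorem mk_conj (g : G) {c : G} (hc : c ∈ Γ k) :
    mk (g * c * g⁻¹) (Normal.conj_mem inferInstance c hc g) = mk c hc := by
  rw [mk_eq_mk_iff]
  convert inv_mul_mul_comm_mem_lowerCentralSeries_succ hc g⁻¹ using 1
  group

instance : CommGroup (LowerCentralGraded G k) where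
  mul_comm a b := by
    obtain ⟨x, hx, rfl⟩ := mk_surjective a
    obtain ⟨y, hy, rfl⟩ := mk_surjective b
    rw [mk_mul, mk_mul, mk_eq_mk_iff]
    exact inv_mul_mul_comm_mem_lowerCentralSeries_succ hx y

def commutatorHom {x : G} (hx : x ∈ Γ k) : G →* LowerCentralGraded G (k + 1) :=
  MonoidHom.mk' (fun g => mk ⁅x, g⁆ (commutatorElement_mem_lowerCentralSeries_succ hx g))
    fun a b => by
      have hb := commutatorElement_mem_lowerCentralSeries_succ hx b
      have e : ⁅x, a * b⁆ = ⁅x, a⁆ * (a * ⁅x, b⁆ * a⁻¹) := by group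
      simp only [← mk_conj a hb, mk_mul, e]

def pairing (k : ℕ) : LowerCentralGraded G k →* Abelianization G →* LowerCentralGraded G (k + 1) :=
  QuotientGroup.lift _
    (MonoidHom.mk' (fun x => Abelianization.lift (commutatorHom x.2)) fun x y => by
      refine Abelianization.hom_ext _ _ (MonoidHom.ext fun g => ?_)
      have hy := commutatorElement_mem_lowerCentralSeries_succ y.2 g
      have e : ⁅(x * y : G), g⁆ = x * ⁅(y : G), g⁆ * (x : G)⁻¹ * ⁅(x : G), g⁆ := by group
      simp only [MonoidHom.comp_apply, Abelianization.lift_apply_of, MonoidHom.mul_apply,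
        commutatorHom, MonoidHom.mk'_apply, Subgroup.coe_mul]
      rw [mul_comm, ← mk_conj (x : G) hy, mk_mul]
      simp only [e])
    fun x hx => by
      refine Abelianization.hom_ext _ _ (MonoidHom.ext fun g => ?_)
      simp only [MonoidHom.comp_apply, Abelianization.lift_apply_of, MonoidHom.mk'_apply,
        commutatorHom, MonoidHom.one_apply]
      exact (mk_eq_one_iff _).2
        (commutatorElement_mem_lowerCentralSeries_succ (mem_subgroupOf.1 hx) g)

theorem closure_range_pairing (k : ℕ) :
    closure (Set.range fun p : LowerCentralGraded G k × Abelianization G =>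
      pairing k p.1 p.2) = ⊤ := by
  refine (eq_top_iff' _).2 fun y => ?_
  obtain ⟨w, hw, rfl⟩ := mk_surjective y
  induction hw using closure_induction with
  | mem _ h =>
    obtain ⟨p, hp, q, -, rfl⟩ := h
    exact subset_closure ⟨(mk p hp, Abelianization.of q), rfl⟩
  | one => exact one_mem _
  | mul a b ha hb iha ihb => exact mul_mem iha ihb
  | inv a ha iha => exact inv_mem iha

def additivePairing (k : ℕ) :
    Additive (LowerCentralGraded G k) →+ Additive (Abelianization G) →+
      Additive (LowerCentralGraded G (k + 1)) :=
  AddMonoidHom.mk' (fun a => MonoidHom.toAdditive (pairing k a.toMul)) fun a b => by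
    ext; simp

theorem closure_range_additivePairing (k : ℕ) :
    AddSubgroup.closure (Set.range fun p : Additive (LowerCentralGraded G k) ×
      Additive (Abelianization G) => additivePairing k p.1 p.2) = ⊤ := by
  have := congrArg toAddSubgroup (closure_range_pairing (G := G) k)
  rwa [toAddSubgroup_closure] at this

theorem pow_surjective {n : ℕ} (hroot : ∀ g : G, ∃ h, h ^ n = g) :
    ∀ k, Function.Surjective fun y : LowerCentralGraded G k => y ^ n
  | 0 => fun y => by
    obtain ⟨x, hx, rfl⟩ := mk_surjective y
    obtain ⟨h, rfl⟩ := hroot x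
    exact ⟨mk h (mem_top h), mk_pow _ n⟩
  | k + 1 => by
    have hpow : closure (Set.range fun p : LowerCentralGraded G k × Abelianization G =>
        pairing k p.1 p.2) ≤ (powMonoidHom n : LowerCentralGraded G (k + 1) →* _).range := by
      rw [closure_le]
      rintro _ ⟨⟨a, b⟩, rfl⟩
      obtain ⟨g, rfl⟩ := QuotientGroup.mk_surjective b
      obtain ⟨h, rfl⟩ := hroot g
      exact ⟨pairing k a (Abelianization.of h), (map_pow _ _ n).symm⟩
    intro y
    exact hpow ((closure_range_pairing k).ge (mem_top y))

end LowerCentralGraded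

open LowerCentralGraded

theorem exists_pow_eq_of_mem_lowerCentralSeries [Group.IsNilpotent G] {n : ℕ}
    (hsurj : ∀ m, Function.Surjective fun y : LowerCentralGraded G m => y ^ n)
    {g : G} (hg : g ∈ Γ k) : ∃ h ∈ Γ k, h ^ n = g := by
  have approx : ∀ j, ∃ h ∈ Γ k, (h ^ n)⁻¹ * g ∈ Γ (k + j) := by
    intro j
    induction j with
    | zero => exact ⟨1, one_mem _, by simpa using hg⟩
    | succ j ih =>
      obtain ⟨h, hh, hr⟩ := ih
      obtain ⟨y, hy⟩ := hsurj (k + j) (mk _ hr)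
      obtain ⟨z, hz, rfl⟩ := mk_surjective y
      dsimp only at hy
      rw [mk_pow, mk_eq_mk_iff, ← QuotientGroup.eq] at hy
      refine ⟨h * z,
        mul_mem hh (Subgroup.lowerCentralSeries_antitone _ (Nat.le_add_right k j) hz), ?_⟩
      show _ ∈ Γ (k + j + 1)
      rw [← QuotientGroup.eq]
      calc (QuotientGroup.mk ((h * z) ^ n) : G ⧸ Γ (k + j + 1))
          = QuotientGroup.mk h ^ n * QuotientGroup.mk (z ^ n) := by
            rw [QuotientGroup.mk_pow, QuotientGroup.mk_mul,
              (commute_mk_of_mem_lowerCentralSeries hz h).symm.mul_pow, QuotientGroup.mk_pow]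
        _ = g := by rw [hy, ← QuotientGroup.mk_pow, ← QuotientGroup.mk_mul, mul_inv_cancel_left]
  obtain ⟨c, hc⟩ := Subgroup.nilpotent_iff_lowerCentralSeries.1 ‹_›
  obtain ⟨h, hh, hr⟩ := approx c
  have hbot : (h ^ n)⁻¹ * g ∈ (⊥ : Subgroup G) :=
    hc ▸ Subgroup.lowerCentralSeries_antitone _ (Nat.le_add_left c k) hr
  exact ⟨h, hh, inv_mul_eq_one.1 (mem_bot.1 hbot)⟩

theorem mem_lowerCentralSeries_of_pow_mem [Group.IsNilpotent G] {n : ℕ}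
    (hsurj : ∀ m, Function.Surjective fun y : LowerCentralGraded G m => y ^ n)
    (hinj : Function.Injective fun g : G => g ^ n) {g : G} (hg : g ^ n ∈ Γ k) : g ∈ Γ k := by
  obtain ⟨h, hh, e⟩ := exists_pow_eq_of_mem_lowerCentralSeries hsurj hg
  rwa [← hinj e]

theorem LowerCentralGraded.pow_bijective [Group.IsNilpotent G] {n : ℕ}
    (hroot : ∀ g : G, ∃ h, h ^ n = g) (hinj : Function.Injective fun g : G => g ^ n) (k : ℕ) :
    Function.Bijective fun y : LowerCentralGraded G k => y ^ n := by
  refine ⟨?_, pow_surjective hroot k⟩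
  show Function.Injective (powMonoidHom n : LowerCentralGraded G k →* _)
  refine (injective_iff_map_eq_one _).2 fun y hy => ?_
  obtain ⟨x, hx, rfl⟩ := mk_surjective y
  rw [powMonoidHom_apply, mk_pow, mk_eq_one_iff] at hy
  exact (mk_eq_one_iff hx).2 (mem_lowerCentralSeries_of_pow_mem (pow_surjective hroot) hinj hy)

theorem LowerCentralGraded.finite [∀ k, Module ℚ (Additive (LowerCentralGraded G k))]
    [Module.Finite ℚ (ℚ ⊗[ℤ] Additive (Abelianization G))] :
    ∀ k, Module.Finite ℚ (Additive (LowerCentralGraded G k))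
  | 0 => Module.Finite.rat_of_surjective_addMonoidHom
      (MonoidHom.toAdditive (Abelianization.lift
        (MonoidHom.mk' (fun g => mk g (mem_top g)) fun _ _ => rfl))) fun y => by
        obtain ⟨x, hx, rfl⟩ := mk_surjective y
        exact ⟨Additive.ofMul (Abelianization.of x), rfl⟩
  | k + 1 =>
    haveI := LowerCentralGraded.finite k
    Module.Finite.rat_of_closure_range_eq_top (additivePairing k)
      (closure_range_additivePairing k)

end LowerCentralGraded

/-- For a nilpotent, uniquely divisible group `G` with `H₁(G, ℚ) = G^{ab} ⊗ ℚ`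
finite-dimensional, each graded piece `Γ^k G / Γ^{k+1} G` of the lower central
series carries the structure of a finite-dimensional `ℚ`-vector space: there is a
finite-dimensional `ℚ`-vector space `V` and a surjection `Γ^k G → V` with kernel
`Γ^{k+1} G`. -/
theorem stmt4 {G : Type} [Group G] [Group.IsNilpotent G]
    (hdiv : ∀ (g : G) (n : ℕ), 0 < n → ∃! h : G, h ^ n = g)
    (hfd : FiniteDimensional ℚ (ℚ ⊗[ℤ] Additive (Abelianization G)))
    (k : ℕ) :
    ∃ (V : Type) (_ : AddCommGroup V) (_ : Module ℚ V) (_ : FiniteDimensional ℚ V)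
      (f : ((⊤ : Subgroup G).lowerCentralSeries k) →* Multiplicative V),
        Function.Surjective f ∧
        f.ker = ((⊤ : Subgroup G).lowerCentralSeries (k + 1)).subgroupOf ((⊤ : Subgroup G).lowerCentralSeries k) := by
  have hbij (m n : ℕ) (hn : 0 < n) :
      Function.Bijective fun y : LowerCentralGraded G m => y ^ n :=
    LowerCentralGraded.pow_bijective (fun g => (hdiv g n hn).exists)
      (fun a b e => (hdiv _ n hn).unique rfl e.symm) m
  let (m : ℕ) : Module ℚ (Additive (LowerCentralGraded G m)) :=
    ratModuleOfBijectiveNSMul (hbij m)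
  exact ⟨Additive (LowerCentralGraded G k), inferInstance, inferInstance,
    LowerCentralGraded.finite k, QuotientGroup.mk' _, QuotientGroup.mk'_surjective _,
    QuotientGroup.ker_mk' _⟩
end
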